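/- Let X be a first countable compact Hausdorff topological space with at least three points, let φ : C(X,ℂ) → C(X,ℂ) be a diameter preserving linear bijection, and let G' be the bijection of the collection of two-element subsets of X determined by G({x,y}) = {G'({x,y})}. Then for two-element subsets {x₁,y₁} and {x₂,y₂} of X, one has {x₁,y₁} ∩ {x₂,y₂} = ∅ if and only if G'({x₁,y₁}) ∩ G'({x₂,y₂}) = ∅. -/

import Mathlib

/-- `S(f)`: the set of two-element subsets `{x,y}` of `X` with
`|f(x) - f(y)| = diam(f(X))`. -/
def diamSet {X : Type*} [TopologicalSpace X] (f : C(X, ℂ)) : Set (Set X) :=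
  {s | ∃ x y : X, x ≠ y ∧ s = {x, y} ∧
    ‖f x - f y‖ = Metric.diam (Set.range ⇑f)}

/-- `T(f)`: the set of triples `(x,y,u)` with `|f(x) - f(y)| = diam(f(X))` and
`u = f(x) - f(y)`. -/
def diamTriple {X : Type*} [TopologicalSpace X] (f : C(X, ℂ)) : Set (X × X × ℂ) :=
  {p | ‖f p.1 - f p.2.1‖ = Metric.diam (Set.range ⇑f) ∧
    p.2.2 = f p.1 - f p.2.1}

/-- `G(s) = ⋂ { S(φ(f)) : f ∈ C(X,ℂ), s ∈ S(f) }`. -/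
def Gset {X : Type*} [TopologicalSpace X] (φ : C(X, ℂ) → C(X, ℂ)) (s : Set X) :
    Set (Set X) :=
  {t | ∀ f : C(X, ℂ), s ∈ diamSet f → t ∈ diamSet (φ f)}

/-- `H(x,y,u) = ⋂ { T(φ(f)) : f ∈ C(X,ℂ), (x,y,u) ∈ T(f) }`. -/
def Hset {X : Type*} [TopologicalSpace X] (φ : C(X, ℂ) → C(X, ℂ)) (x y : X) (u : ℂ) :
    Set (X × X × ℂ) :=
  {p | ∀ f : C(X, ℂ), (x, y, u) ∈ diamTriple f → p ∈ diamTriple (φ f)}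

/-- `φ` is diameter preserving: `diam(φ(f)(X)) = diam(f(X))` for all `f`. -/
def DiamPreserving {X : Type*} [TopologicalSpace X] (φ : C(X, ℂ) → C(X, ℂ)) : Prop :=
  ∀ f : C(X, ℂ), Metric.diam (Set.range ⇑(φ f)) = Metric.diam (Set.range ⇑f)

/-- The collection of two-element subsets of `X`. -/
abbrev TwoSet (X : Type*) := {s : Set X // ∃ a b : X, a ≠ b ∧ s = {a, b}}

/-!
Let `G'({x, y}) = {a, b}`. Since points are Gδ, some `g` of diameter one has `g x - g y = 1`
and `|g w - g w'| = 1` only for `{w, w'} = {x, y}`. Comparing `φ f` with `φ (f + t • g)` for a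
suitable unimodular `t`, the equality case of the triangle inequality gives a unimodular `λ`
with `φ f a - φ f b = λ (f x - f y)` whenever `{x, y} ∈ S(f)`, and shows that `{a, b} ∈ S(φ f)`
forces `{x, y} ∈ S(f)`.

If `{x, y}` and `{x', y'}` are disjoint, Urysohn functions `f₁, f₂` of diameter one with
`f₁ x - f₁ y = f₂ x - f₂ y = 1` and `f₁ x' - f₁ y' = -(f₂ x' - f₂ y') = 1` exist. If `{a, b}`
and `{a', b'}` shared a point, the diameters of `φ f₁` and `φ f₂` would bound both `|λ + λ'|`
and `|λ - λ'|` by one, against the parallelogram law. The converse runs the same argument on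
preimages under `φ`, using the second property of `λ`.
-/

open Metric Set

section Diameter

variable {X E : Type*} [TopologicalSpace X] [SeminormedAddCommGroup E]

lemma diam_range_smul {𝕜 : Type*} [NormedDivisionRing 𝕜] [Module 𝕜 E] [NormSMulClass 𝕜 E]
    (c : 𝕜) (f : C(X, E)) : diam (range (c • f)) = ‖c‖ * diam (range f) := by
  rw [ContinuousMap.coe_smul, ← diam_smul₀, ← range_smul]
  rfl

variable [CompactSpace X]

lemma norm_sub_le_diam_range (f : C(X, E)) (w w' : X) : ‖f w - f w'‖ ≤ diam (range f) := by
  rw [← dist_eq_norm]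
  exact dist_le_diam_of_mem (isCompact_range f.continuous).isBounded
    (mem_range_self w) (mem_range_self w')

lemma diam_range_add_le (f g : C(X, E)) :
    diam (range (f + g)) ≤ diam (range f) + diam (range g) := by
  refine diam_le_of_forall_dist_le (add_nonneg diam_nonneg diam_nonneg) ?_
  rintro _ ⟨w, rfl⟩ _ ⟨w', rfl⟩
  calc dist ((f + g) w) ((f + g) w') = ‖(f w - f w') + (g w - g w')‖ := by
        rw [dist_eq_norm, ContinuousMap.add_apply, ContinuousMap.add_apply, add_sub_add_comm]
    _ ≤ diam (range f) + diam (range g) := (norm_add_le _ _).trans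
        (add_le_add (norm_sub_le_diam_range f w w') (norm_sub_le_diam_range g w w'))

lemma exists_norm_sub_eq_diam_range [Nonempty X] (f : C(X, E)) :
    ∃ w w', ‖f w - f w'‖ = diam (range f) := by
  obtain ⟨⟨w, w'⟩, -, hmax⟩ := isCompact_univ.exists_isMaxOn univ_nonempty
    (by fun_prop : Continuous fun p : X × X ↦ ‖f p.1 - f p.2‖).continuousOn
  refine ⟨w, w', (norm_sub_le_diam_range f w w').antisymm
    (diam_le_of_forall_dist_le (norm_nonneg _) ?_)⟩
  rintro _ ⟨v, rfl⟩ _ ⟨v', rfl⟩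
  rw [dist_eq_norm]
  exact hmax (mem_univ (v, v'))

end Diameter

section InnerProductSpace

variable {F : Type*} [NormedAddCommGroup F] [InnerProductSpace ℝ F]

lemma one_lt_norm_add_or_one_lt_norm_sub {u v : F} (hu : ‖u‖ = 1) (hv : ‖v‖ = 1) :
    1 < ‖u + v‖ ∨ 1 < ‖u - v‖ := by
  by_contra! h
  have := parallelogram_law_with_norm ℝ u v
  rw [hu, hv] at this
  nlinarith [norm_nonneg (u + v), norm_nonneg (u - v)]

lemma eq_smul_of_norm_add_eq {u v : F} {d : ℝ} (hu : ‖u‖ = 1) (hv : ‖v‖ ≤ d)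
    (h : ‖v + u‖ = d + 1) : v = d • u := by
  have hvd : ‖v‖ = d := hv.antisymm (by linarith [norm_add_le v u])
  have := norm_add_eq_iff_real.mp (by rw [h, hvd, hu])
  rwa [hu, one_smul, hvd] at this

end InnerProductSpace

lemma diam_range_ofReal_le_one {ι : Type*} {g : ι → ℝ} (hg : ∀ w, g w ∈ Icc 0 1) :
    diam (range fun w ↦ (g w : ℂ)) ≤ 1 := by
  calc diam (range fun w ↦ (g w : ℂ)) = diam (range g) := by
        rw [← Complex.isometry_ofReal.diam_image, ← range_comp]; rfl
    _ ≤ diam (Icc (0 : ℝ) 1) := diam_mono (range_subset_iff.2 hg) (isBounded_Icc 0 1)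
    _ = 1 := by rw [Real.diam_Icc zero_le_one, sub_zero]

section Urysohn

variable {X : Type*} [TopologicalSpace X]

lemma exists_continuousMap_complex_zero_one_of_isClosed [NormalSpace X] {s t : Set X}
    (hs : IsClosed s) (ht : IsClosed t) (hd : Disjoint s t) :
    ∃ f : C(X, ℂ), EqOn f 0 s ∧ EqOn f 1 t ∧ diam (range f) ≤ 1 := by
  obtain ⟨g, hg0, hg1, hg⟩ := exists_continuous_zero_one_of_isClosed hs ht hd
  exact ⟨⟨fun w ↦ (g w : ℂ), by fun_prop⟩, fun w hw ↦ by simp [hg0 hw],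
    fun w hw ↦ by simp [hg1 hw], diam_range_ofReal_le_one hg⟩

lemma exists_peak_pair [T2Space X] [LocallyCompactSpace X] [FirstCountableTopology X] {x y : X}
    (hxy : x ≠ y) :
    ∃ G : C(X, ℂ), G x - G y = 1 ∧ diam (range G) ≤ 1 ∧
      ∀ w w', ‖G w - G w'‖ = 1 → (w = x ∧ w' = y) ∨ (w = y ∧ w' = x) := by
  obtain ⟨u, hu1, hu0, -, hu⟩ := exists_continuous_one_zero_of_isCompact_of_isGδ
    isCompact_singleton (IsGδ.singleton x) isClosed_singleton (disjoint_singleton.2 hxy)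
  obtain ⟨v, hv1, hv0, -, hv⟩ := exists_continuous_one_zero_of_isCompact_of_isGδ
    isCompact_singleton (IsGδ.singleton y) isClosed_singleton (disjoint_singleton.2 hxy.symm)
  set g : X → ℝ := fun w ↦ (1 + u w - v w) / 2
  have hg : ∀ w, g w ∈ Icc 0 1 := fun w ↦ by
    obtain ⟨⟨hu₀, hu₁⟩, ⟨hv₀, hv₁⟩⟩ := And.intro (hu w) (hv w)
    constructor <;> simp only [g] <;> linarith
  have hg1 : ∀ w, g w = 1 → w = x := fun w hw ↦ by
    rw [← mem_singleton_iff, hu1, mem_preimage, mem_singleton_iff]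
    simp only [g] at hw
    linarith [(hu w).2, (hv w).1]
  have hg0 : ∀ w, g w = 0 → w = y := fun w hw ↦ by
    rw [← mem_singleton_iff, hv1, mem_preimage, mem_singleton_iff]
    simp only [g] at hw
    linarith [(hu w).1, (hv w).2]
  have hux : u x = 1 := by simpa using hu1.subset rfl
  have hvy : v y = 1 := by simpa using hv1.subset rfl
  refine ⟨⟨fun w ↦ (g w : ℂ), by fun_prop⟩, ?_, diam_range_ofReal_le_one hg, fun w w' h ↦ ?_⟩
  · simp [g, hux, hvy, hu0 rfl, hv0 rfl]
  · rw [ContinuousMap.coe_mk, ← Complex.ofReal_sub, Complex.norm_real, Real.norm_eq_abs] at h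
    rcases abs_eq (zero_le_one' ℝ) |>.1 h with h | h
    · exact .inl ⟨hg1 w (by linarith [(hg w).2, (hg w').1]), hg0 w' (by linarith [(hg w).2, (hg w').1])⟩
    · exact .inr ⟨hg0 w (by linarith [(hg w).1, (hg w').2]), hg1 w' (by linarith [(hg w).1, (hg w').2])⟩

end Urysohn

section Compact

variable {X : Type*} [TopologicalSpace X] [CompactSpace X]

lemma exists_sign_pattern [T2Space X] {x y x' y' : X} (hxy : x ≠ y) (hxy' : x' ≠ y')
    (hdisj : ({x, y} : Set X) ∩ {x', y'} = ∅) :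
    ∃ f₁ f₂ : C(X, ℂ), diam (range f₁) = 1 ∧ diam (range f₂) = 1 ∧
      f₁ x - f₁ y = 1 ∧ f₁ x' - f₁ y' = 1 ∧ f₂ x - f₂ y = 1 ∧ f₂ x' - f₂ y' = -1 := by
  have hne {u v : X} (hu : u ∈ ({x, y} : Set X)) (hv : v ∈ ({x', y'} : Set X)) : u ≠ v :=
    (disjoint_iff_inter_eq_empty.2 hdisj).ne_of_mem hu hv
  have hxx' : x ≠ x' := hne (by simp) (by simp)
  have hxy'' : x ≠ y' := hne (by simp) (by simp)
  have hyx' : y ≠ x' := hne (by simp) (by simp)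
  have hyy' : y ≠ y' := hne (by simp) (by simp)
  have hpair {p q r s : X} (h₁ : r ≠ p) (h₂ : r ≠ q) (h₃ : s ≠ p) (h₄ : s ≠ q) :
      Disjoint ({p, q} : Set X) {r, s} := by
    simp [h₁, h₂, h₃, h₄]
  have hclosed (p q : X) : IsClosed ({p, q} : Set X) := (toFinite _).isClosed
  obtain ⟨f₁, hf₁0, hf₁1, hD₁⟩ := exists_continuousMap_complex_zero_one_of_isClosed
    (hclosed y y') (hclosed x x') (hpair hxy hxy'' hyx'.symm hxy')
  obtain ⟨f₂, hf₂0, hf₂1, hD₂⟩ := exists_continuousMap_complex_zero_one_of_isClosed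
    (hclosed y x') (hclosed x y') (hpair hxy hxx' hyy'.symm hxy'.symm)
  have diam_eq {f : C(X, ℂ)} (hD : diam (range f) ≤ 1) (h : f x - f y = 1) :
      diam (range f) = 1 :=
    hD.antisymm (by simpa [h] using norm_sub_le_diam_range f x y)
  have h₁ : f₁ x - f₁ y = 1 := by simp [hf₁1 (by simp : x ∈ _), hf₁0 (by simp : y ∈ _)]
  have h₂ : f₂ x - f₂ y = 1 := by simp [hf₂1 (by simp : x ∈ _), hf₂0 (by simp : y ∈ _)]
  refine ⟨f₁, f₂, diam_eq hD₁ h₁, diam_eq hD₂ h₂, h₁, ?_, h₂, ?_⟩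
  · simp [hf₁1 (by simp : x' ∈ _), hf₁0 (by simp : y' ∈ _)]
  · simp [hf₂1 (by simp : y' ∈ _), hf₂0 (by simp : x' ∈ _)]

lemma inter_eq_empty_of_sign_pattern {h₁ h₂ : C(X, ℂ)} (hD₁ : diam (range h₁) ≤ 1)
    (hD₂ : diam (range h₂) ≤ 1) {a b a' b' : X} {A B : ℂ} (hA : ‖A‖ = 1) (hB : ‖B‖ = 1)
    (e₁ : h₁ a - h₁ b = A) (e₁' : h₁ a' - h₁ b' = B)
    (e₂ : h₂ a - h₂ b = A) (e₂' : h₂ a' - h₂ b' = -B) :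
    ({a, b} : Set X) ∩ {a', b'} = ∅ := by
  have bound {h : C(X, ℂ)} (hD : diam (range h) ≤ 1) {z : ℂ} (w w' : X)
      (hz : h w - h w' = z) : ‖z‖ ≤ 1 :=
    hz ▸ (norm_sub_le_diam_range h w w').trans hD
  by_contra hne
  obtain ⟨e, he, he'⟩ := nonempty_iff_ne_empty.2 hne
  have hcom : a = a' ∨ a = b' ∨ b = a' ∨ b = b' := by
    simp only [mem_insert_iff, mem_singleton_iff] at he he'
    rcases he with rfl | rfl <;> rcases he' with rfl | rfl <;> simp
  have : ‖A + B‖ ≤ 1 ∧ ‖A - B‖ ≤ 1 := by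
    rcases hcom with rfl | rfl | rfl | rfl
    · exact ⟨bound hD₂ b' b (by linear_combination e₂ - e₂'),
        bound hD₁ b' b (by linear_combination e₁ - e₁')⟩
    · exact ⟨bound hD₁ a' b (by linear_combination e₁ + e₁'),
        bound hD₂ a' b (by linear_combination e₂ + e₂')⟩
    · exact ⟨bound hD₁ a b' (by linear_combination e₁ + e₁'),
        bound hD₂ a b' (by linear_combination e₂ + e₂')⟩
    · exact ⟨bound hD₂ a a' (by linear_combination e₂ - e₂'),
        bound hD₁ a a' (by linear_combination e₁ - e₁')⟩
  rcases one_lt_norm_add_or_one_lt_norm_sub hA hB with h | h <;> linarith [this.1, this.2]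

end Compact

section Multiplier

variable {X : Type*} [TopologicalSpace X] [CompactSpace X] {x y a b : X}

lemma norm_sub_eq_diam_of_le_diam_add_smul {f G : C(X, ℂ)} {t : ℂ} (ht : ‖t‖ = 1)
    (hGD : diam (range G) ≤ 1)
    (hpeak : ∀ w w', ‖G w - G w'‖ = 1 → (w = x ∧ w' = y) ∨ (w = y ∧ w' = x))
    (h : diam (range f) + 1 ≤ diam (range (f + t • G))) :
    ‖f x - f y‖ = diam (range f) := by
  have : Nonempty X := ⟨x⟩
  obtain ⟨w, w', hw⟩ := exists_norm_sub_eq_diam_range (f + t • G)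
  have hsplit : ‖(f + t • G) w - (f + t • G) w'‖ ≤ ‖f w - f w'‖ + ‖G w - G w'‖ := by
    calc ‖(f + t • G) w - (f + t • G) w'‖ = ‖(f w - f w') + t * (G w - G w')‖ := by
          simp only [ContinuousMap.add_apply, ContinuousMap.smul_apply, smul_eq_mul]; ring_nf
      _ ≤ ‖f w - f w'‖ + ‖G w - G w'‖ := by
          rw [← one_mul ‖G w - G w'‖, ← ht, ← norm_mul]; exact norm_add_le _ _
  have hf := norm_sub_le_diam_range f w w'
  have hG := (norm_sub_le_diam_range G w w').trans hGD
  rcases hpeak w w' (by linarith) with ⟨rfl, rfl⟩ | ⟨rfl, rfl⟩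
  · linarith
  · rw [norm_sub_rev]; linarith

variable (φ : C(X, ℂ) →ₗ[ℂ] C(X, ℂ))

lemma norm_map_sub_eq_one (hdp : DiamPreserving φ)
    (hmem : ∀ f : C(X, ℂ), ‖f x - f y‖ = diam (range f) → ‖φ f a - φ f b‖ = diam (range (φ f)))
    {G : C(X, ℂ)} (hG : G x - G y = 1) (hGD : diam (range G) ≤ 1) :
    ‖φ G a - φ G b‖ = 1 := by
  have hGD' : diam (range G) = 1 :=
    hGD.antisymm (by simpa [hG] using norm_sub_le_diam_range G x y)
  rw [hmem G (by rw [hG, norm_one, hGD']), hdp, hGD']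

lemma map_sub_eq_mul_sub (hdp : DiamPreserving φ)
    (hmem : ∀ f : C(X, ℂ), ‖f x - f y‖ = diam (range f) → ‖φ f a - φ f b‖ = diam (range (φ f)))
    {G : C(X, ℂ)} (hG : G x - G y = 1) (hGD : diam (range G) ≤ 1)
    {f : C(X, ℂ)} (hf : ‖f x - f y‖ = diam (range f)) :
    φ f a - φ f b = (φ G a - φ G b) * (f x - f y) := by
  set d := diam (range f)
  obtain ⟨t, ht, hft⟩ : ∃ t : ℂ, ‖t‖ = 1 ∧ f x - f y = d * t :=
    ⟨_, Complex.norm_exp_ofReal_mul_I _, by rw [← hf, Complex.norm_mul_exp_arg_mul_I]⟩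
  have hFxy : (f + t • G) x - (f + t • G) y = ((d + 1 : ℝ) : ℂ) * t := by
    simp only [ContinuousMap.add_apply, ContinuousMap.smul_apply, smul_eq_mul]
    push_cast
    linear_combination hft + t * hG
  have hFnorm : ‖(f + t • G) x - (f + t • G) y‖ = d + 1 := by
    rw [hFxy, norm_mul, ht, mul_one, Complex.norm_real, Real.norm_of_nonneg (by positivity)]
  have hFD : diam (range (f + t • G)) = d + 1 := by
    refine le_antisymm ?_ (hFnorm ▸ norm_sub_le_diam_range _ x y)
    calc diam (range (f + t • G)) ≤ d + diam (range (t • G)) := diam_range_add_le f _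
      _ ≤ d + 1 := by rw [diam_range_smul, ht, one_mul]; linarith
  have hφF : ‖(φ f a - φ f b) + t * (φ G a - φ G b)‖ = d + 1 := by
    rw [← hFD, ← hdp, ← hmem _ (hFnorm.trans hFD.symm), map_add, map_smul]
    simp only [ContinuousMap.add_apply, ContinuousMap.smul_apply, smul_eq_mul]
    ring_nf
  have hεf : ‖φ f a - φ f b‖ ≤ d := (norm_sub_le_diam_range _ a b).trans_eq (hdp f)
  have hunit : ‖t * (φ G a - φ G b)‖ = 1 := by
    rw [norm_mul, ht, one_mul, norm_map_sub_eq_one φ hdp hmem hG hGD]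
  rw [eq_smul_of_norm_add_eq hunit hεf hφF, hft, Complex.real_smul]
  ring

lemma norm_sub_eq_diam_of_norm_map_sub_eq (hdp : DiamPreserving φ) {G : C(X, ℂ)}
    (hunit : ‖φ G a - φ G b‖ = 1) (hGD : diam (range G) ≤ 1)
    (hpeak : ∀ w w', ‖G w - G w'‖ = 1 → (w = x ∧ w' = y) ∨ (w = y ∧ w' = x))
    {f : C(X, ℂ)} (hf : ‖φ f a - φ f b‖ = diam (range (φ f))) :
    ‖f x - f y‖ = diam (range f) := by
  set d := diam (range f)
  set l := φ G a - φ G b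
  have hd : ‖φ f a - φ f b‖ = d := hf.trans (hdp f)
  obtain ⟨s, hs, hfs⟩ : ∃ s : ℂ, ‖s‖ = 1 ∧ φ f a - φ f b = d * s :=
    ⟨_, Complex.norm_exp_ofReal_mul_I _, by rw [← hd, Complex.norm_mul_exp_arg_mul_I]⟩
  have hl : l ≠ 0 := norm_ne_zero_iff.1 (hunit ▸ one_ne_zero)
  refine norm_sub_eq_diam_of_le_diam_add_smul (t := s / l)
    (by rw [norm_div, hs, hunit, div_one]) hGD hpeak ?_
  have hφF : φ (f + (s / l) • G) a - φ (f + (s / l) • G) b = ((d + 1 : ℝ) : ℂ) * s := by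
    rw [map_add, map_smul]
    simp only [ContinuousMap.add_apply, ContinuousMap.smul_apply, smul_eq_mul]
    push_cast
    field_simp
    linear_combination l * hfs
  calc d + 1 = ‖φ (f + (s / l) • G) a - φ (f + (s / l) • G) b‖ := by
        rw [hφF, norm_mul, hs, mul_one, Complex.norm_real, Real.norm_of_nonneg (by positivity)]
    _ ≤ diam (range (φ (f + (s / l) • G))) := norm_sub_le_diam_range _ a b
    _ = diam (range (f + (s / l) • G)) := hdp _

theorem exists_pair_multiplier [T2Space X] [FirstCountableTopology X] (hdp : DiamPreserving φ)
    (hxy : x ≠ y)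
    (hmem : ∀ f : C(X, ℂ), ‖f x - f y‖ = diam (range f) → ‖φ f a - φ f b‖ = diam (range (φ f))) :
    ∃ l : ℂ, ‖l‖ = 1 ∧
      (∀ f : C(X, ℂ), ‖f x - f y‖ = diam (range f) → φ f a - φ f b = l * (f x - f y)) ∧
      (∀ f : C(X, ℂ), ‖φ f a - φ f b‖ = diam (range (φ f)) → ‖f x - f y‖ = diam (range f)) := by
  obtain ⟨G, hG, hGD, hpeak⟩ := exists_peak_pair hxy
  have hunit := norm_map_sub_eq_one φ hdp hmem hG hGD
  exact ⟨_, hunit, fun f ↦ map_sub_eq_mul_sub φ hdp hmem hG hGD,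
    fun f ↦ norm_sub_eq_diam_of_norm_map_sub_eq φ hdp hunit hGD hpeak⟩

end Multiplier

section Disjointness

variable {X : Type*} [TopologicalSpace X] {φ : C(X, ℂ) → C(X, ℂ)} {x y x' y' a b a' b' : X}
  {l l' : ℂ}

lemma sub_eq_inv_mul_of_map_sub_eq (hl : ‖l‖ = 1)
    (hp : ∀ f : C(X, ℂ), ‖f x - f y‖ = diam (range f) → φ f a - φ f b = l * (f x - f y))
    (hp' : ∀ f : C(X, ℂ), ‖φ f a - φ f b‖ = diam (range (φ f)) → ‖f x - f y‖ = diam (range f))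
    {f : C(X, ℂ)} {c : ℂ} (hc : ‖c‖ = 1) (hD : diam (range (φ f)) = 1)
    (h : φ f a - φ f b = c) : f x - f y = l⁻¹ * c := by
  have hl0 : l ≠ 0 := norm_ne_zero_iff.1 (hl ▸ one_ne_zero)
  rw [← h, hp f (hp' f (by rw [h, hc, hD])), ← mul_assoc, inv_mul_cancel₀ hl0, one_mul]

variable [CompactSpace X] [T2Space X]

theorem image_inter_eq_empty (hdp : DiamPreserving φ) (hl : ‖l‖ = 1) (hl' : ‖l'‖ = 1)
    (hp : ∀ f : C(X, ℂ), ‖f x - f y‖ = diam (range f) → φ f a - φ f b = l * (f x - f y))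
    (hq : ∀ f : C(X, ℂ), ‖f x' - f y'‖ = diam (range f) → φ f a' - φ f b' = l' * (f x' - f y'))
    (hxy : x ≠ y) (hxy' : x' ≠ y') (hdisj : ({x, y} : Set X) ∩ {x', y'} = ∅) :
    ({a, b} : Set X) ∩ {a', b'} = ∅ := by
  obtain ⟨f₁, f₂, hD₁, hD₂, e₁, e₁', e₂, e₂'⟩ := exists_sign_pattern hxy hxy' hdisj
  refine inter_eq_empty_of_sign_pattern (h₁ := φ f₁) (h₂ := φ f₂)
    (hdp f₁ ▸ hD₁.le) (hdp f₂ ▸ hD₂.le) hl hl' ?_ ?_ ?_ ?_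
  · rw [hp f₁ (by rw [e₁, norm_one, hD₁]), e₁, mul_one]
  · rw [hq f₁ (by rw [e₁', norm_one, hD₁]), e₁', mul_one]
  · rw [hp f₂ (by rw [e₂, norm_one, hD₂]), e₂, mul_one]
  · rw [hq f₂ (by rw [e₂', norm_neg, norm_one, hD₂]), e₂', mul_neg_one]

theorem inter_eq_empty_of_image (hsurj : Function.Surjective φ) (hdp : DiamPreserving φ)
    (hl : ‖l‖ = 1) (hl' : ‖l'‖ = 1)
    (hp : ∀ f : C(X, ℂ), ‖f x - f y‖ = diam (range f) → φ f a - φ f b = l * (f x - f y))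
    (hq : ∀ f : C(X, ℂ), ‖f x' - f y'‖ = diam (range f) → φ f a' - φ f b' = l' * (f x' - f y'))
    (hp' : ∀ f : C(X, ℂ), ‖φ f a - φ f b‖ = diam (range (φ f)) → ‖f x - f y‖ = diam (range f))
    (hq' : ∀ f : C(X, ℂ), ‖φ f a' - φ f b'‖ = diam (range (φ f)) → ‖f x' - f y'‖ = diam (range f))
    (hab : a ≠ b) (hab' : a' ≠ b') (hdisj : ({a, b} : Set X) ∩ {a', b'} = ∅) :
    ({x, y} : Set X) ∩ {x', y'} = ∅ := by
  obtain ⟨g₁, g₂, hD₁, hD₂, e₁, e₁', e₂, e₂'⟩ := exists_sign_pattern hab hab' hdisj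
  obtain ⟨f₁, rfl⟩ := hsurj g₁
  obtain ⟨f₂, rfl⟩ := hsurj g₂
  have hinv {c : ℂ} (hc : ‖c‖ = 1) : ‖c⁻¹‖ = 1 := by rw [norm_inv, hc, inv_one]
  refine inter_eq_empty_of_sign_pattern (hdp f₁ ▸ hD₁.le) (hdp f₂ ▸ hD₂.le) (hinv hl) (hinv hl')
    ?_ ?_ ?_ ?_
  · simpa using sub_eq_inv_mul_of_map_sub_eq hl hp hp' norm_one hD₁ e₁
  · simpa using sub_eq_inv_mul_of_map_sub_eq hl' hq hq' norm_one hD₁ e₁'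
  · simpa using sub_eq_inv_mul_of_map_sub_eq hl hp hp' norm_one hD₂ e₂
  · simpa using sub_eq_inv_mul_of_map_sub_eq hl' hq hq' (by rw [norm_neg, norm_one]) hD₂ e₂'

end Disjointness

section DiamSet

variable {X : Type*} [TopologicalSpace X] {x y a b : X}

lemma pair_mem_diamSet_iff (hxy : x ≠ y) (f : C(X, ℂ)) :
    ({x, y} : Set X) ∈ diamSet f ↔ ‖f x - f y‖ = diam (range f) := by
  refine ⟨fun ⟨x', y', _, heq, h⟩ ↦ ?_, fun h ↦ ⟨x, y, hxy, rfl, h⟩⟩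
  rcases pair_eq_pair_iff.mp heq.symm with ⟨rfl, rfl⟩ | ⟨rfl, rfl⟩
  · exact h
  · rwa [norm_sub_rev]

lemma norm_map_sub_eq_diam_of_Gset_eq {φ : C(X, ℂ) → C(X, ℂ)} (hxy : x ≠ y) (hab : a ≠ b)
    (h : Gset φ {x, y} = {{a, b}}) (f : C(X, ℂ)) (hf : ‖f x - f y‖ = diam (range f)) :
    ‖φ f a - φ f b‖ = diam (range (φ f)) :=
  (pair_mem_diamSet_iff hab _).1
    ((h ▸ mem_singleton _ : ({a, b} : Set X) ∈ Gset φ {x, y}) f ((pair_mem_diamSet_iff hxy f).2 hf))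

end DiamSet

theorem Gmap_disjoint_iff_general
    {X : Type*} [TopologicalSpace X] [CompactSpace X] [T2Space X]
    [FirstCountableTopology X]
    (φ : C(X, ℂ) →ₗ[ℂ] C(X, ℂ)) (hbij : Function.Bijective φ)
    (hdp : DiamPreserving (⇑φ))
    (G' : TwoSet X → TwoSet X)
    (hG' : ∀ p : TwoSet X, Gset (⇑φ) p.val = {(G' p).val})
    (p q : TwoSet X) :
    p.val ∩ q.val = ∅ ↔ (G' p).val ∩ (G' q).val = ∅ := by
  obtain ⟨x, y, hxy, hp⟩ := p.2
  obtain ⟨x', y', hxy', hq⟩ := q.2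
  obtain ⟨a, b, hab, hGp⟩ := (G' p).2
  obtain ⟨a', b', hab', hGq⟩ := (G' q).2
  have hGp' := hG' p
  have hGq' := hG' q
  rw [hp, hGp] at hGp'
  rw [hq, hGq] at hGq'
  obtain ⟨l, hl, hfor, hrev⟩ :=
    exists_pair_multiplier φ hdp hxy (norm_map_sub_eq_diam_of_Gset_eq hxy hab hGp')
  obtain ⟨l', hl', hfor', hrev'⟩ :=
    exists_pair_multiplier φ hdp hxy' (norm_map_sub_eq_diam_of_Gset_eq hxy' hab' hGq')
  rw [hp, hq, hGp, hGq]
  exact ⟨image_inter_eq_empty hdp hl hl' hfor hfor' hxy hxy',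
    inter_eq_empty_of_image hbij.2 hdp hl hl' hfor hfor' hrev hrev' hab hab'⟩

/-- Step 6: two two-element subsets are disjoint iff their `G'`-images are disjoint. -/
theorem Gmap_disjoint_iff
    {X : Type*} [TopologicalSpace X] [CompactSpace X] [T2Space X]
    [FirstCountableTopology X]
    (h3 : ∃ a b c : X, a ≠ b ∧ a ≠ c ∧ b ≠ c)
    (φ : C(X, ℂ) →ₗ[ℂ] C(X, ℂ)) (hbij : Function.Bijective φ)
    (hdp : DiamPreserving (⇑φ))
    (G' : TwoSet X → TwoSet X) (hG'bij : Function.Bijective G')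
    (hG' : ∀ p : TwoSet X, Gset (⇑φ) p.val = {(G' p).val})
    (p q : TwoSet X) :
    p.val ∩ q.val = ∅ ↔ (G' p).val ∩ (G' q).val = ∅ :=
  Gmap_disjoint_iff_general φ hbij hdp G' hG' p q
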